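/- arXiv:1602.05688 — 6 statements merged into one kernel-verified Lean document; each statement's English description precedes it below -/
import Mathlib

section
/- Let k be an algebraically closed field, let E and F be finite-dimensional k-vector spaces, and let x_F : F → F and x_E : E → E be linear endomorphisms having no common eigenvalue (i.e. there is no μ ∈ k which is an eigenvalue of both x_F and x_E). Then the linear endomorphism of Hom_k(E, F) given by v ↦ x_F ∘ v − v ∘ x_E is bijective. -/
/-!
If `xF ∘ v = v ∘ xE`, then `p(xF) ∘ v = v ∘ p(xE)` for every polynomial `p`. The minimal
polynomials of `xE` and `xF` have as roots exactly their eigenvalues, so over an algebraically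
closed field they are coprime; a Bezout identity `a mE + b mF = 1` then gives
`v = a(xF) ∘ v ∘ mE(xE) + b(xF) ∘ mF(xF) ∘ v = 0`. Hence the Sylvester map is injective,
and therefore bijective since `Hom_k(E, F)` is finite-dimensional.
-/

open Polynomial Module

section Intertwining

variable {R M N : Type*} [CommRing R] [AddCommGroup M] [Module R M] [AddCommGroup N] [Module R N]
  {f : End R M} {g : End R N} {v : M →ₗ[R] N}

theorem LinearMap.comp_aeval_eq_aeval_comp (hv : v ∘ₗ f = g ∘ₗ v) (p : R[X]) :
    v ∘ₗ aeval f p = aeval g p ∘ₗ v := by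
  induction p using Polynomial.induction_on with
  | C a => ext x; simp
  | add p q hp hq => simp only [map_add, LinearMap.comp_add, LinearMap.add_comp, hp, hq]
  | monomial n a ih =>
    rw [pow_succ, ← mul_assoc, map_mul _ _ X, map_mul _ _ X, aeval_X, aeval_X, End.mul_eq_comp,
      End.mul_eq_comp, ← LinearMap.comp_assoc, ih, LinearMap.comp_assoc, hv,
      LinearMap.comp_assoc]

theorem LinearMap.eq_zero_of_comp_eq_comp_of_isCoprime (hv : v ∘ₗ f = g ∘ₗ v) {p q : R[X]}
    (hpq : IsCoprime p q) (hp : aeval f p = 0) (hq : aeval g q = 0) : v = 0 := by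
  obtain ⟨a, b, hab⟩ := hpq
  calc v = aeval g (a * p + b * q) ∘ₗ v := by rw [hab, map_one, End.one_eq_id, LinearMap.id_comp]
    _ = aeval g a ∘ₗ (v ∘ₗ aeval f p) + aeval g b ∘ₗ aeval g q ∘ₗ v := by
      rw [LinearMap.comp_aeval_eq_aeval_comp hv, map_add, map_mul, map_mul, LinearMap.add_comp,
        End.mul_eq_comp, End.mul_eq_comp, LinearMap.comp_assoc, LinearMap.comp_assoc]
    _ = 0 := by rw [hp, hq]; simp

end Intertwining

theorem Module.End.isCoprime_minpoly_of_forall_not_hasEigenvalue {k M N : Type*} [Field k]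
    [IsAlgClosed k] [AddCommGroup M] [Module k M] [AddCommGroup N] [Module k N]
    [FiniteDimensional k M] [FiniteDimensional k N] {f : End k M} {g : End k N}
    (h : ∀ μ : k, ¬(f.HasEigenvalue μ ∧ g.HasEigenvalue μ)) :
    IsCoprime (minpoly k f) (minpoly k g) := by
  refine (isCoprime_iff_aeval_ne_zero_of_isAlgClosed k k _ _).mpr fun μ => ?_
  simpa only [hasEigenvalue_iff_isRoot, IsRoot.def, coe_aeval_eq_eval, not_and_or] using h μ

/-- Let `k` be an algebraically closed field, `E`, `F` finite-dimensional
`k`-vector spaces, and `xF : F → F`, `xE : E → E` linear endomorphisms having no common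
eigenvalue. Then `v ↦ xF ∘ v - v ∘ xE` is a bijective endomorphism of `Hom_k(E, F)`. -/
theorem stmt0 {k : Type*} [Field k] [IsAlgClosed k]
    {E F : Type*} [AddCommGroup E] [Module k E] [AddCommGroup F] [Module k F]
    [FiniteDimensional k E] [FiniteDimensional k F]
    (xF : F →ₗ[k] F) (xE : E →ₗ[k] E)
    (h : ∀ μ : k, ¬(Module.End.HasEigenvalue xF μ ∧ Module.End.HasEigenvalue xE μ)) :
    Function.Bijective (fun v : E →ₗ[k] F => xF ∘ₗ v - v ∘ₗ xE) := by
  let T : End k (E →ₗ[k] F) := LinearMap.llcomp k E F F xF - LinearMap.lcomp k F xE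
  have hT : Function.Injective T := by
    refine (injective_iff_map_eq_zero T).mpr fun v hv => ?_
    exact LinearMap.eq_zero_of_comp_eq_comp_of_isCoprime (sub_eq_zero.mp hv).symm
      (End.isCoprime_minpoly_of_forall_not_hasEigenvalue fun μ => (h μ).imp And.symm)
      (minpoly.aeval k xE) (minpoly.aeval k xF)
  exact ⟨hT, LinearMap.injective_iff_surjective.mp hT⟩
end

section
/- The k-linear map Hom(E, F_1) × Hom(E, F_{m−1}) → Hom(E, F) given by (v_1, v_{m−1}) ↦ v_1 + v_{m−1} ∘ x_E − x_F ∘ v_{m−1} is a linear isomorphism (here v_1, v_{m−1} and x_F ∘ v_{m−1}, v_{m−1} ∘ x_E are viewed as elements of Hom(E, F) via the inclusions F_1 ⊆ F and F_{m−1} ⊆ F). -/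
/-!
The map is injective: if `v₁ + v ∘ xE - xF ∘ v = 0` with `v` valued in `F_{m-1}`, then
`xF ∘ v ≡ v ∘ xE` modulo `F_1`, so whenever `v` is valued in `F_j` (`j ≥ 1`) so is `xF ∘ v`,
and injectivity of `F_j/F_{j-1} → F_{j+1}/F_j` pushes `v` down into `F_{j-1}`. Descending from
`j = m - 1` gives `v = 0`, hence `v₁ = 0`. Both sides have dimension `m · dim E`, so the map is
bijective.
-/

open Module

theorem monotoneOn_nat_Iic_of_le_succ {α : Type*} [Preorder α] {f : ℕ → α} {n : ℕ}
    (hf : ∀ j < n, f j ≤ f (j + 1)) : MonotoneOn f (Set.Iic n) := by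
  have hmin : Monotone fun j => f (min j n) := monotone_nat_of_le_succ fun j => by
    rcases lt_or_ge j n with h | h
    · rw [min_eq_left h.le, min_eq_left h]
      exact hf j h
    · rw [min_eq_right h, min_eq_right (by omega)]
  intro a ha b hb hab
  simpa [min_eq_left (Set.mem_Iic.mp ha), min_eq_left (Set.mem_Iic.mp hb)] using hmin hab

section Flag

variable {R F ι : Type*} [Ring R] [AddCommGroup F] [Module R F]

theorem eq_zero_of_forall_mem_flag {Fl : ℕ → Submodule R F} {n : ℕ}
    (hFl : MonotoneOn Fl (Set.Iic n)) (hbot : Fl 0 = ⊥) {xF : F → F}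
    (hinj : ∀ j, 1 ≤ j → j ≤ n → ∀ v ∈ Fl j, xF v ∈ Fl j → v ∈ Fl (j - 1))
    (σ : ι → ι) {f : ι → F} (hf : ∀ i, f i ∈ Fl n) (hcomm : ∀ i, xF (f i) - f (σ i) ∈ Fl 1) :
    f = 0 := by
  have hdescent : ∀ j ≤ n, ∀ i, f i ∈ Fl j := by
    intro j hj
    induction hj using Nat.decreasingInduction with
    | self => exact hf
    | of_succ j hjn ih =>
      intro i
      have hFl1 : Fl 1 ≤ Fl (j + 1) :=
        hFl (Set.mem_Iic.mpr (by omega)) (Set.mem_Iic.mpr hjn) (by omega)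
      have hx : xF (f i) ∈ Fl (j + 1) := by
        simpa using add_mem (hFl1 (hcomm i)) (ih (σ i))
      simpa using hinj (j + 1) (by omega) hjn (f i) (ih i) hx
  funext i
  simpa [hbot] using hdescent 0 n.zero_le i

end Flag

section SylvesterCoprod

variable {k E F : Type*} [Field k] [AddCommGroup E] [Module k E] [AddCommGroup F] [Module k F]

def sylvesterCoprod (P Q : Submodule k F) (xF : F →ₗ[k] F) (xE : E →ₗ[k] E) :
    (E →ₗ[k] P) × (E →ₗ[k] Q) →ₗ[k] E →ₗ[k] F where
  toFun vw :=
    P.subtype ∘ₗ vw.1 + (Q.subtype ∘ₗ vw.2) ∘ₗ xE - xF ∘ₗ (Q.subtype ∘ₗ vw.2)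
  map_add' _ _ := by ext; simp only [Prod.fst_add, Prod.snd_add, LinearMap.comp_add,
    LinearMap.add_comp, LinearMap.add_apply, LinearMap.sub_apply]; abel
  map_smul' _ _ := by ext; simp [smul_sub]

@[simp]
theorem sylvesterCoprod_apply (P Q : Submodule k F) (xF : F →ₗ[k] F) (xE : E →ₗ[k] E)
    (vw : (E →ₗ[k] P) × (E →ₗ[k] Q)) (e : E) :
    sylvesterCoprod P Q xF xE vw e = vw.1 e + vw.2 (xE e) - xF (vw.2 e) :=
  rfl

theorem sylvesterCoprod_injective {Fl : ℕ → Submodule k F} {n : ℕ}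
    (hFl : MonotoneOn Fl (Set.Iic n)) (hbot : Fl 0 = ⊥) {xF : F →ₗ[k] F}
    (hinj : ∀ j, 1 ≤ j → j ≤ n → ∀ v ∈ Fl j, xF v ∈ Fl j → v ∈ Fl (j - 1))
    (xE : E →ₗ[k] E) : Function.Injective (sylvesterCoprod (Fl 1) (Fl n) xF xE) := by
  rw [← LinearMap.ker_eq_bot, LinearMap.ker_eq_bot']
  rintro ⟨v, w⟩ h0
  have hcomm (e : E) : xF (w e) - (w (xE e) : F) = v e := by
    have := LinearMap.congr_fun h0 e
    simp only [sylvesterCoprod_apply, LinearMap.zero_apply] at this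
    linear_combination (norm := module) -this
  have hw : w = 0 := by
    have := eq_zero_of_forall_mem_flag hFl hbot hinj xE (f := fun e => (w e : F))
      (fun e => (w e).2) (fun e => hcomm e ▸ (v e).2)
    ext e
    simpa using congr_fun this e
  have hv : v = 0 := by
    ext e
    simpa [hw] using (hcomm e).symm
  simp [hv, hw]

theorem finrank_prod_linearMap {M N : Type*} [AddCommGroup M] [Module k M] [AddCommGroup N]
    [Module k N] [FiniteDimensional k E] [FiniteDimensional k M] [FiniteDimensional k N]
    [FiniteDimensional k F] (h : finrank k M + finrank k N = finrank k F) :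
    finrank k ((E →ₗ[k] M) × (E →ₗ[k] N)) = finrank k (E →ₗ[k] F) := by
  rw [finrank_prod, finrank_linearMap, finrank_linearMap, finrank_linearMap, ← h, mul_add]

end SylvesterCoprod

theorem stmt1_general {k : Type*} [Field k] {m : ℕ} (hm : 1 ≤ m)
    {E F : Type*} [AddCommGroup E] [Module k E] [AddCommGroup F] [Module k F]
    [FiniteDimensional k E] [FiniteDimensional k F]
    (Fl : ℕ → Submodule k F)
    (hmono : ∀ j, j < m → Fl j ≤ Fl (j + 1))
    (hdim : ∀ j ≤ m, Module.finrank k (Fl j) = j)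
    (hbot : Fl 0 = ⊥) (htop : Fl m = ⊤)
    (xF : F →ₗ[k] F) (xE : E →ₗ[k] E)
    (hinj : ∀ j, 1 ≤ j → j ≤ m - 1 → ∀ v ∈ Fl j, xF v ∈ Fl j → v ∈ Fl (j - 1)) :
    Function.Bijective (fun vw : (E →ₗ[k] (Fl 1)) × (E →ₗ[k] (Fl (m - 1))) =>
      (Fl 1).subtype ∘ₗ vw.1 + ((Fl (m - 1)).subtype ∘ₗ vw.2) ∘ₗ xE
        - xF ∘ₗ ((Fl (m - 1)).subtype ∘ₗ vw.2)) := by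
  have hFl : MonotoneOn Fl (Set.Iic (m - 1)) :=
    (monotoneOn_nat_Iic_of_le_succ hmono).mono (Set.Iic_subset_Iic.mpr (m.sub_le 1))
  have hinjΦ := sylvesterCoprod_injective hFl hbot hinj xE
  have hrank : finrank k (Fl 1) + finrank k (Fl (m - 1)) = finrank k F := by
    rw [hdim 1 hm, hdim (m - 1) (m.sub_le 1), ← finrank_top k F, ← htop, hdim m le_rfl]
    omega
  exact ⟨hinjΦ, (LinearMap.injective_iff_surjective_of_finrank_eq_finrank
    (finrank_prod_linearMap hrank)).mp hinjΦ⟩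

/-- Let `k` be a field, `F` an `m`-dimensional `k`-vector space (`m ≥ 1`)
with a full flag `0 = F_0 ⊂ F_1 ⊂ ⋯ ⊂ F_m = F` (`dim F_j = j`), and `E` a finite-dimensional
`k`-vector space.  Let `xF : F → F` satisfy `xF (F_j) ⊆ F_{j+1}` for `1 ≤ j ≤ m-1`, with the
induced maps `F_j/F_{j-1} → F_{j+1}/F_j` isomorphisms (encoded below as: the induced map is
surjective, i.e. `xF(F_j) ⊔ F_j = F_{j+1}`, and injective, i.e. `v ∈ F_j` with `xF v ∈ F_j`
implies `v ∈ F_{j-1}`).  Let `xE : E → E` be arbitrary.  Then the map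
`Hom(E, F_1) × Hom(E, F_{m-1}) → Hom(E, F)`,
`(v₁, v_{m-1}) ↦ v₁ + v_{m-1} ∘ xE − xF ∘ v_{m-1}` is a linear isomorphism, where
`Hom(E, F')` is viewed inside `Hom(E, F)` via the inclusion `F' ⊆ F`. -/
theorem stmt1 {k : Type*} [Field k] {m : ℕ} (hm : 1 ≤ m)
    {E F : Type*} [AddCommGroup E] [Module k E] [AddCommGroup F] [Module k F]
    [FiniteDimensional k E] [FiniteDimensional k F]
    (Fl : ℕ → Submodule k F)
    (hmono : ∀ j, j < m → Fl j ≤ Fl (j + 1))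
    (hdim : ∀ j ≤ m, Module.finrank k (Fl j) = j)
    (hbot : Fl 0 = ⊥) (htop : Fl m = ⊤)
    (xF : F →ₗ[k] F) (xE : E →ₗ[k] E)
    (hmap : ∀ j, 1 ≤ j → j ≤ m - 1 → ∀ v ∈ Fl j, xF v ∈ Fl (j + 1))
    (hsurj : ∀ j, 1 ≤ j → j ≤ m - 1 → (Fl j).map xF ⊔ Fl j = Fl (j + 1))
    (hinj : ∀ j, 1 ≤ j → j ≤ m - 1 → ∀ v ∈ Fl j, xF v ∈ Fl j → v ∈ Fl (j - 1)) :
    Function.Bijective (fun vw : (E →ₗ[k] (Fl 1)) × (E →ₗ[k] (Fl (m - 1))) =>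
      (Fl 1).subtype ∘ₗ vw.1 + ((Fl (m - 1)).subtype ∘ₗ vw.2) ∘ₗ xE
        - xF ∘ₗ ((Fl (m - 1)).subtype ∘ₗ vw.2)) :=
  stmt1_general hm Fl hmono hdim hbot htop xF xE hinj
end

section
/- The k-linear map Hom(E, F_{m−1}) → Hom(E, F/F_1) sending v to the composition of v ∘ x_E − x_F ∘ v : E → F with the quotient projection F → F/F_1 is a linear isomorphism. -/
/-!
If `v : E → F_{m-1}` satisfies `v ∘ x_E ≡ x_F ∘ v` modulo `F_1` and takes values in `F_j`, then
`x_F ∘ v` also takes values in `F_j ⊇ F_1`, and injectivity of `x_F : F_j/F_{j-1} → F_{j+1}/F_j`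
pushes the values of `v` down to `F_{j-1}`. Descending from `F_{m-1}` to `F_0 = 0` shows the map is
injective, and both sides have dimension `(m - 1) · dim E`.
-/

open Module LinearMap

section

variable {k E F : Type*} [Field k] [AddCommGroup F] [Module k F]

theorem apply_mem_of_defect_mem {U V W : Submodule k F} {xF : F → F} {xE : E → E} {v : E → F}
    (hv : ∀ e, v e ∈ V) (hUV : U ≤ V) (hdefect : ∀ e, v (xE e) - xF (v e) ∈ U)
    (hVW : ∀ u ∈ V, xF u ∈ V → u ∈ W) (e : E) : v e ∈ W := by
  refine hVW _ (hv e) ?_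
  rw [← sub_sub_cancel (v (xE e)) (xF (v e))]
  exact V.sub_mem (hv _) (hUV (hdefect e))

theorem apply_mem_zero_of_defect_mem (Fl : ℕ → Submodule k F) {xF : F → F} {xE : E → E}
    {v : E → F} {n : ℕ} (hle : ∀ j, 1 ≤ j → j ≤ n → Fl 1 ≤ Fl j)
    (hinj : ∀ j, 1 ≤ j → j ≤ n → ∀ u ∈ Fl j, xF u ∈ Fl j → u ∈ Fl (j - 1))
    (hv : ∀ e, v e ∈ Fl n) (hdefect : ∀ e, v (xE e) - xF (v e) ∈ Fl 1) (e : E) : v e ∈ Fl 0 := by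
  induction n with
  | zero => exact hv e
  | succ n ih =>
    refine ih (fun j h1 hj ↦ hle j h1 (by omega)) (fun j h1 hj ↦ hinj j h1 (by omega)) ?_
    exact apply_mem_of_defect_mem hv (hle _ (by omega) le_rfl) hdefect
      (hinj (n + 1) (by omega) le_rfl)

variable [AddCommGroup E] [Module k E]

def intertwiningDefectMod (p q : Submodule k F) (xF : F →ₗ[k] F) (xE : E →ₗ[k] E) :
    (E →ₗ[k] p) →ₗ[k] E →ₗ[k] F ⧸ q :=
  compRight k q.mkQ ∘ₗ (lcomp k F xE - compRight k xF) ∘ₗ compRight k p.subtype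

theorem injective_intertwiningDefectMod (Fl : ℕ → Submodule k F) (xF : F →ₗ[k] F)
    (xE : E →ₗ[k] E) {n : ℕ} (hbot : Fl 0 = ⊥) (hle : ∀ j, 1 ≤ j → j ≤ n → Fl 1 ≤ Fl j)
    (hinj : ∀ j, 1 ≤ j → j ≤ n → ∀ u ∈ Fl j, xF u ∈ Fl j → u ∈ Fl (j - 1)) :
    Function.Injective (intertwiningDefectMod (Fl n) (Fl 1) xF xE) := by
  refine (injective_iff_map_eq_zero _).mpr fun w hw ↦ ext fun e ↦ ?_
  have hdefect : ∀ e, (w (xE e) : F) - xF (w e) ∈ Fl 1 := fun e ↦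
    (Submodule.Quotient.mk_eq_zero _).mp (congr($hw e))
  have h := apply_mem_zero_of_defect_mem Fl hle hinj (fun e ↦ (w e).2) hdefect e
  rw [hbot, Submodule.mem_bot] at h
  exact Subtype.ext h

theorem finrank_quotient_flag_one [FiniteDimensional k F] (Fl : ℕ → Submodule k F) {m : ℕ}
    (hm : 1 ≤ m) (hdim : ∀ j ≤ m, finrank k (Fl j) = j) (htop : Fl m = ⊤) :
    finrank k (F ⧸ Fl 1) = m - 1 := by
  have hF : finrank k F = m := by rw [← finrank_top, ← htop, hdim m le_rfl]
  have := (Fl 1).finrank_quotient_add_finrank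
  rw [hdim 1 hm] at this
  omega

end

theorem stmt2_general {k : Type*} [Field k] {m : ℕ} (hm : 1 ≤ m)
    {E F : Type*} [AddCommGroup E] [Module k E] [AddCommGroup F] [Module k F]
    [FiniteDimensional k E] [FiniteDimensional k F]
    (Fl : ℕ → Submodule k F)
    (hmono : ∀ j, j < m → Fl j ≤ Fl (j + 1))
    (hdim : ∀ j ≤ m, Module.finrank k (Fl j) = j)
    (hbot : Fl 0 = ⊥) (htop : Fl m = ⊤)
    (xF : F →ₗ[k] F) (xE : E →ₗ[k] E)
    (hinj : ∀ j, 1 ≤ j → j ≤ m - 1 → ∀ v ∈ Fl j, xF v ∈ Fl j → v ∈ Fl (j - 1)) :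
    Function.Bijective (fun w : E →ₗ[k] (Fl (m - 1)) =>
      (Fl 1).mkQ ∘ₗ (((Fl (m - 1)).subtype ∘ₗ w) ∘ₗ xE
        - xF ∘ₗ ((Fl (m - 1)).subtype ∘ₗ w))) := by
  have hmonoOn : MonotoneOn Fl (Set.Iic m) :=
    monotoneOn_of_le_add_one Set.ordConnected_Iic fun j _ _ hj ↦ hmono j hj
  have hle : ∀ j, 1 ≤ j → j ≤ m - 1 → Fl 1 ≤ Fl j := fun j h1 hj ↦
    hmonoOn (Set.mem_Iic.mpr hm) (Set.mem_Iic.mpr (by omega)) h1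
  have hinjective := injective_intertwiningDefectMod Fl xF xE hbot hle hinj
  have hfinrank : finrank k (E →ₗ[k] Fl (m - 1)) = finrank k (E →ₗ[k] F ⧸ Fl 1) := by
    rw [finrank_linearMap, finrank_linearMap, hdim _ (Nat.sub_le m 1),
      finrank_quotient_flag_one Fl hm hdim htop]
  exact ⟨hinjective, (injective_iff_surjective_of_finrank_eq_finrank hfinrank).mp hinjective⟩

/-- Same setup as Statement 1: `k` a field, `F` an `m`-dimensional
`k`-vector space with a full flag `0 = F_0 ⊂ F_1 ⊂ ⋯ ⊂ F_m = F`, `E` finite-dimensional,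
`xF : F → F` with `xF(F_j) ⊆ F_{j+1}` for `1 ≤ j ≤ m-1` inducing isomorphisms
`F_j/F_{j-1} → F_{j+1}/F_j` (encoded via surjectivity `xF(F_j) ⊔ F_j = F_{j+1}` and
injectivity `v ∈ F_j, xF v ∈ F_j ⟹ v ∈ F_{j-1}`), `xE : E → E` arbitrary.  Then the map
`Hom(E, F_{m-1}) → Hom(E, F/F_1)` sending `v` to the composition of
`v ∘ xE − xF ∘ v : E → F` with the projection `F → F/F_1` is a linear isomorphism. -/
theorem stmt2 {k : Type*} [Field k] {m : ℕ} (hm : 1 ≤ m)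
    {E F : Type*} [AddCommGroup E] [Module k E] [AddCommGroup F] [Module k F]
    [FiniteDimensional k E] [FiniteDimensional k F]
    (Fl : ℕ → Submodule k F)
    (hmono : ∀ j, j < m → Fl j ≤ Fl (j + 1))
    (hdim : ∀ j ≤ m, Module.finrank k (Fl j) = j)
    (hbot : Fl 0 = ⊥) (htop : Fl m = ⊤)
    (xF : F →ₗ[k] F) (xE : E →ₗ[k] E)
    (hmap : ∀ j, 1 ≤ j → j ≤ m - 1 → ∀ v ∈ Fl j, xF v ∈ Fl (j + 1))
    (hsurj : ∀ j, 1 ≤ j → j ≤ m - 1 → (Fl j).map xF ⊔ Fl j = Fl (j + 1))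
    (hinj : ∀ j, 1 ≤ j → j ≤ m - 1 → ∀ v ∈ Fl j, xF v ∈ Fl j → v ∈ Fl (j - 1)) :
    Function.Bijective (fun w : E →ₗ[k] (Fl (m - 1)) =>
      (Fl 1).mkQ ∘ₗ (((Fl (m - 1)).subtype ∘ₗ w) ∘ₗ xE
        - xF ∘ₗ ((Fl (m - 1)).subtype ∘ₗ w))) :=
  stmt2_general hm Fl hmono hdim hbot htop xF xE hinj
end

section
/- Let k be a field, let 1 ≤ m ≤ n, let a = (a_1,…,a_m) ∈ k^m, let x_E be an invertible (n−m)×(n−m) matrix over k, and let y be an arbitrary m×(n−m) matrix over k. Then there exist a unique m×(n−m) matrix v_1 all of whose rows except possibly the first are zero, and a unique m×(n−m) matrix w whose last (m-th) row is zero, such that y = v_1 + w·x_E − C(a)·w. -/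
/-!
Since the last row of `w` vanishes, `C(a) * w` is `w` shifted down by one row. Hence row
`i + 1` of `y = v₁ + w * xE - C(a) * w` says `v₁ (i + 1) = 0` exactly when
`w i = w (i + 1) * xE - y (i + 1)`, a backward recursion which, started from `w (m - 1) = 0`,
determines `w` uniquely; the first row of the equation then determines `v₁`.
-/

/-- The companion matrix `C(a)` of `a = (a_1, …, a_m)`: it satisfies `C(a) e_j = e_{j+1}`
for `1 ≤ j ≤ m-1` and `C(a) e_m = -a_m e_1 - a_{m-1} e_2 - ⋯ - a_1 e_m` (here `a i`
represents `a_{i+1}` for `i : Fin m`). Its characteristic polynomial is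
`t^m + a_1 t^{m-1} + ⋯ + a_m`. -/
def companion {k : Type*} [CommRing k] {m : ℕ} (a : Fin m → k) :
    Matrix (Fin m) (Fin m) k :=
  Matrix.of fun i j =>
    if (j : ℕ) + 1 = m then -a ⟨m - 1 - (i : ℕ), by have := i.isLt; omega⟩
    else if (i : ℕ) = (j : ℕ) + 1 then 1 else 0

open Matrix

theorem Fin.existsUnique_reverseRecursion {α : Type*} {p : ℕ} (x : α) (g : Fin p → α → α) :
    ∃! f : Fin (p + 1) → α, f (Fin.last p) = x ∧ ∀ i, f i.castSucc = g i (f i.succ) := by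
  refine ⟨Fin.reverseInduction x g, ⟨Fin.reverseInduction_last, Fin.reverseInduction_castSucc⟩, ?_⟩
  rintro f ⟨hlast, hrec⟩
  funext i
  induction i using Fin.reverseInduction with
  | last => rw [hlast, Fin.reverseInduction_last]
  | cast i ih => rw [hrec, ih, Fin.reverseInduction_castSucc]

section Companion

variable {k ι : Type*} [CommRing k] {p : ℕ} {a : Fin (p + 1) → k}

lemma companion_mul_apply_succ {w : Matrix (Fin (p + 1)) ι k} (hw : w (Fin.last p) = 0)
    (i : Fin p) : (companion a * w) i.succ = w i.castSucc := by
  ext j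
  have hlt (l : Fin p) : (l : ℕ) ≠ p := l.isLt.ne
  simp [Matrix.mul_apply, Fin.sum_univ_castSucc, hw, companion, hlt, Fin.val_inj]

lemma row_succ_eq_zero_iff_of_eq_add_mul_sub_companion_mul [Fintype ι] {x : Matrix ι ι k}
    {v w y : Matrix (Fin (p + 1)) ι k} (hw : w (Fin.last p) = 0)
    (hy : y = v + w * x - companion a * w) (i : Fin p) :
    v i.succ = 0 ↔ w i.castSucc = w i.succ ᵥ* x - y i.succ := by
  have hrow : y i.succ = v i.succ + w i.succ ᵥ* x - w i.castSucc := by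
    rw [hy, ← companion_mul_apply_succ hw i]
    rfl
  rw [hrow, show w i.succ ᵥ* x - (v i.succ + w i.succ ᵥ* x - w i.castSucc) =
    w i.castSucc - v i.succ by abel]
  exact sub_eq_self.symm.trans eq_comm

end Companion

theorem stmt3_general {k : Type*} [Field k] {m n : ℕ} (hm : 1 ≤ m)
    (a : Fin m → k) (xE : Matrix (Fin (n - m)) (Fin (n - m)) k)
    (y : Matrix (Fin m) (Fin (n - m)) k) :
    ∃! vw : Matrix (Fin m) (Fin (n - m)) k × Matrix (Fin m) (Fin (n - m)) k,
      (∀ (i : Fin m) (j : Fin (n - m)), (i : ℕ) ≠ 0 → vw.1 i j = 0) ∧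
      (∀ (i : Fin m) (j : Fin (n - m)), (i : ℕ) = m - 1 → vw.2 i j = 0) ∧
      y = vw.1 + vw.2 * xE - companion a * vw.2 := by
  obtain ⟨p, rfl⟩ := Nat.exists_eq_add_of_le' hm
  have rows_succ {v : Matrix (Fin (p + 1)) (Fin (n - (p + 1))) k} :
      (∀ (i : Fin (p + 1)) j, (i : ℕ) ≠ 0 → v i j = 0) ↔ ∀ i : Fin p, v i.succ = 0 := by
    simp [Fin.forall_fin_succ, funext_iff]
  have row_last {w : Matrix (Fin (p + 1)) (Fin (n - (p + 1))) k} :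
      (∀ (i : Fin (p + 1)) j, (i : ℕ) = p + 1 - 1 → w i j = 0) ↔ w (Fin.last p) = 0 := by
    simp [Fin.forall_fin_succ', funext_iff, (Fin.isLt _).ne]
  simp only [rows_succ, row_last]
  obtain ⟨w, ⟨hlast, hrec⟩, huniq⟩ : ∃! w : Matrix (Fin (p + 1)) (Fin (n - (p + 1))) k,
      w (Fin.last p) = 0 ∧ ∀ i : Fin p, w i.castSucc = w i.succ ᵥ* xE - y i.succ :=
    Fin.existsUnique_reverseRecursion 0 fun i r => r ᵥ* xE - y i.succ
  have hy : y = (y - w * xE + companion a * w) + w * xE - companion a * w := by abel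
  refine ⟨(_, w), ⟨fun i => ?_, hlast, hy⟩, ?_⟩
  · exact (row_succ_eq_zero_iff_of_eq_add_mul_sub_companion_mul hlast hy i).2 (hrec i)
  rintro ⟨v, w'⟩ ⟨hv, hw', hy' : y = v + w' * xE - companion a * w'⟩
  obtain rfl : w' = w := huniq w'
    ⟨hw', fun i => (row_succ_eq_zero_iff_of_eq_add_mul_sub_companion_mul hw' hy' i).1 (hv i)⟩
  rw [hy']
  congr 1
  abel

/-- Let `k` be a field, `1 ≤ m ≤ n`, `a ∈ k^m`, `xE` an invertible
`(n-m)×(n-m)` matrix and `y` an arbitrary `m×(n-m)` matrix.  Then there exist a unique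
`m×(n-m)` matrix `v₁` all of whose rows except possibly the first vanish, and a unique
`m×(n-m)` matrix `w` whose last row vanishes, with `y = v₁ + w·xE − C(a)·w`. -/
theorem stmt3 {k : Type*} [Field k] {m n : ℕ} (hm : 1 ≤ m) (hmn : m ≤ n)
    (a : Fin m → k) (xE : Matrix (Fin (n - m)) (Fin (n - m)) k) (hxE : IsUnit xE)
    (y : Matrix (Fin m) (Fin (n - m)) k) :
    ∃! vw : Matrix (Fin m) (Fin (n - m)) k × Matrix (Fin m) (Fin (n - m)) k,
      (∀ (i : Fin m) (j : Fin (n - m)), (i : ℕ) ≠ 0 → vw.1 i j = 0) ∧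
      (∀ (i : Fin m) (j : Fin (n - m)), (i : ℕ) = m - 1 → vw.2 i j = 0) ∧
      y = vw.1 + vw.2 * xE - companion a * vw.2 :=
  stmt3_general hm a xE y
end

section
/- Let k be a field (or more generally a commutative ring), m ≥ 1, a = (a_1,…,a_m) ∈ k^m and v = (v_1,…,v_{m−1}) ∈ k^{m−1}. Then the characteristic polynomial of the product u(v)·C(a) equals t^m + b_1 t^{m−1} + ⋯ + b_{m−1} t + b_m, where b_m = a_m and b_r = a_r + Σ_{i=1}^{r−1} a_i v_{r−i} + v_r for 1 ≤ r ≤ m−1. -/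
/-- For `v = (v_1, …, v_{m-1}) ∈ k^{m-1}` (here `v j` represents `v_{j+1}` for
`j : Fin (m-1)`), `uNeg v` is the `m×m` matrix equal to the identity except that its
first row is `(1, -v_1, …, -v_{m-1})`. -/
def uNeg {k : Type*} [CommRing k] {m : ℕ} (v : Fin (m - 1) → k) :
    Matrix (Fin m) (Fin m) k :=
  Matrix.of fun i j =>
    if i = j then 1
    else if (i : ℕ) = 0 then
      (if h : 1 ≤ (j : ℕ) then -v ⟨(j : ℕ) - 1, by have := j.isLt; omega⟩ else 0)
    else 0

/-! Let `q_d = t^d + a_1 t^{d-1} + ⋯ + a_d` be the Horner partial sums of `a`. The vector `w` with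
`w_j = q_{m-j}(t)` satisfies `C(a) w = t w - q_m(t) e_1`, and since `u(v)` only changes the first
row, `(t - u(v) C(a)) w = c e_1` with `c = q_m(t) + t ∑_j v_j q_{m-1-j}(t)`. As `w_m = 1` and the
minor of `t - u(v) C(a)` without its first row and last column is triangular with diagonal `-1`,
Cramer's rule gives `det (t - u(v) C(a)) = c`. The sum `∑_j v_j q_{m-1-j}` obeys the Horner
recursion for the coefficients `a_r + ∑ a_i v_{r-i} + v_r`, which yields the `b_r`. -/

open Polynomial Matrix Finset

def extendByZero {R : Type*} [Zero R] {m : ℕ} (a : Fin m → R) (i : ℕ) : R :=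
  if h : i < m then a ⟨i, h⟩ else 0

lemma extendByZero_of_lt {R : Type*} [Zero R] {m : ℕ} (a : Fin m → R) {i : ℕ} (h : i < m) :
    extendByZero a i = a ⟨i, h⟩ :=
  dif_pos h

@[simp]
lemma extendByZero_val {R : Type*} [Zero R] {m : ℕ} (a : Fin m → R) (i : Fin m) :
    extendByZero a i = a i :=
  extendByZero_of_lt a i.isLt

section Horner

variable {R : Type*} [CommSemiring R]

def hornerSum (c : ℕ → R) (t : R) (d : ℕ) : R :=
  ∑ r ∈ range d, c r * t ^ (d - 1 - r)

lemma hornerSum_succ (c : ℕ → R) (t : R) (d : ℕ) :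
    hornerSum c t (d + 1) = t * hornerSum c t d + c d := by
  rw [hornerSum, sum_range_succ, hornerSum, mul_sum, Nat.add_sub_cancel, Nat.sub_self, pow_zero,
    mul_one]
  congr 1
  refine sum_congr rfl fun r hr => ?_
  rw [show d - r = d - 1 - r + 1 by have := mem_range.1 hr; omega, pow_succ]
  ring

lemma mul_hornerSum (c : ℕ → R) (t : R) (d : ℕ) :
    t * hornerSum c t d = ∑ r ∈ range d, c r * t ^ (d - r) := by
  rw [hornerSum, mul_sum]
  refine sum_congr rfl fun r hr => ?_
  rw [show d - r = d - 1 - r + 1 by have := mem_range.1 hr; omega, pow_succ]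
  ring

def hornerMonic (c : ℕ → R) (t : R) (d : ℕ) : R :=
  t ^ d + hornerSum c t d

@[simp]
lemma hornerMonic_zero (c : ℕ → R) (t : R) : hornerMonic c t 0 = 1 := by
  simp [hornerMonic, hornerSum]

lemma hornerMonic_succ (c : ℕ → R) (t : R) (d : ℕ) :
    hornerMonic c t (d + 1) = t * hornerMonic c t d + c d := by
  rw [hornerMonic, hornerMonic, hornerSum_succ]
  ring

lemma sum_mul_hornerMonic (a v : ℕ → R) (t : R) (n : ℕ) :
    ∑ j ∈ range n, v j * hornerMonic a t (n - 1 - j) =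
      hornerSum (fun r => ∑ i ∈ range r, a i * v (r - 1 - i) + v r) t n := by
  induction n with
  | zero => simp [hornerSum]
  | succ n ih =>
    have hstep : ∀ j ∈ range n, v j * hornerMonic a t (n - j) =
        t * (v j * hornerMonic a t (n - 1 - j)) + v j * a (n - 1 - j) := by
      intro j hj
      rw [show n - j = n - 1 - j + 1 by have := mem_range.1 hj; omega, hornerMonic_succ]
      ring
    have hreflect :
        ∑ i ∈ range n, a i * v (n - 1 - i) = ∑ j ∈ range n, v j * a (n - 1 - j) := by
      rw [← sum_range_reflect]
      refine sum_congr rfl fun j hj => ?_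
      rw [show n - 1 - (n - 1 - j) = j by have := mem_range.1 hj; omega, mul_comm]
    rw [hornerSum_succ, ← ih, sum_range_succ, Nat.add_sub_cancel, Nat.sub_self, hornerMonic_zero,
      sum_congr rfl hstep, sum_add_distrib, ← mul_sum, hreflect, mul_one, add_assoc]

end Horner

lemma det_eq_of_mulVec_eq_single {R : Type*} [CommRing R] {n : ℕ}
    (A : Matrix (Fin (n + 1)) (Fin (n + 1)) R) {w : Fin (n + 1) → R} {c : R}
    (hw : w (Fin.last n) = 1) (hA : A *ᵥ w = Pi.single 0 c) :
    A.det = (-1) ^ n * (A.submatrix Fin.succ Fin.castSucc).det * c := by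
  have h := congrFun (congrArg (· *ᵥ w) (adjugate_mul A)) (Fin.last n)
  simp only [← mulVec_mulVec, hA, smul_mulVec, one_mulVec, Pi.smul_apply, hw, smul_eq_mul,
    mul_one, mulVec_single, op_smul_eq_mul, col_apply] at h
  rw [← h, adjugate_fin_succ_eq_det_submatrix, Fin.succAbove_zero, Fin.succAbove_last]
  simp

section CompanionMatrix

variable {R : Type*} [CommRing R] {n : ℕ}

lemma companion_apply_last (a : Fin (n + 1) → R) (i : Fin (n + 1)) :
    companion a i (Fin.last n) = -extendByZero a (n - i) := by
  simp [companion, extendByZero]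

lemma companion_apply_castSucc (a : Fin (n + 1) → R) (i : Fin (n + 1)) (j : Fin n) :
    companion a i j.castSucc = if i = j.succ then 1 else 0 := by
  simp [companion, Fin.ext_iff, j.isLt.ne]

lemma companion_mulVec_hornerMonic (a : Fin (n + 1) → R) (t : R) :
    companion a *ᵥ (fun j : Fin (n + 1) => hornerMonic (extendByZero a) t (n - j)) =
      t • (fun j : Fin (n + 1) => hornerMonic (extendByZero a) t (n - j)) -
        Pi.single 0 (hornerMonic (extendByZero a) t (n + 1)) := by
  ext i
  simp only [mulVec, dotProduct, Fin.sum_univ_castSucc, companion_apply_last,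
    companion_apply_castSucc, Fin.val_last, Nat.sub_self, hornerMonic_zero, mul_one, boole_mul]
  induction i using Fin.cases with
  | zero => simp [hornerMonic_succ, (Fin.succ_ne_zero _).symm]
  | succ i =>
    simp only [Fin.succ_inj, sum_ite_eq, mem_univ, if_true, Fin.val_castSucc, Pi.sub_apply,
      Pi.smul_apply, smul_eq_mul, Pi.single_eq_of_ne (Fin.succ_ne_zero i), sub_zero, Fin.val_succ]
    rw [show n - (i : ℕ) = n - (i + 1) + 1 by omega, hornerMonic_succ]
    ring

lemma uNeg_mulVec (v : Fin n → R) (x : Fin (n + 1) → R) :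
    uNeg (m := n + 1) v *ᵥ x = x - Pi.single 0 (∑ j, v j * x j.succ) := by
  ext i
  induction i using Fin.cases with
  | zero =>
    simp [mulVec, dotProduct, Fin.sum_univ_succ, uNeg, (Fin.succ_ne_zero _).symm, sub_eq_add_neg]
  | succ i => simp [mulVec, dotProduct, uNeg, Fin.succ_ne_zero]

lemma uNeg_mul_apply_succ (v : Fin n → R) (M : Matrix (Fin (n + 1)) (Fin (n + 1)) R)
    (i : Fin n) (j : Fin (n + 1)) : (uNeg (m := n + 1) v * M) i.succ j = M i.succ j := by
  simp [mul_apply, uNeg]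

lemma scalar_sub_uNeg_mul_companion_mulVec (a : Fin (n + 1) → R) (v : Fin n → R) (t : R) :
    (scalar (Fin (n + 1)) t - uNeg (m := n + 1) v * companion a) *ᵥ
        (fun j : Fin (n + 1) => hornerMonic (extendByZero a) t (n - j)) =
      Pi.single 0 (hornerMonic (extendByZero a) t (n + 1) +
        t * ∑ j : Fin n, v j * hornerMonic (extendByZero a) t (n - 1 - j)) := by
  rw [sub_mulVec, ← mulVec_mulVec, companion_mulVec_hornerMonic, mulVec_sub, mulVec_smul,
    uNeg_mulVec, uNeg_mulVec, scalar_apply]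
  ext i
  induction i using Fin.cases with
  | zero =>
    simp only [Pi.sub_apply, mulVec_diagonal, Pi.smul_apply, Pi.single_eq_same, smul_eq_mul,
      Fin.val_succ, Pi.single_eq_of_ne (Fin.succ_ne_zero _), mul_zero, sum_const_zero, sub_zero,
      Nat.sub_sub, Nat.add_comm 1]
    ring
  | succ i => simp [Fin.succ_ne_zero]

lemma det_submatrix_succ_castSucc_scalar_sub_uNeg_mul_companion (a : Fin (n + 1) → R)
    (v : Fin n → R) (t : R) :
    ((scalar (Fin (n + 1)) t - uNeg (m := n + 1) v * companion a).submatrix Fin.succ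
      Fin.castSucc).det = (-1) ^ n := by
  rw [det_of_isUpperTriangular]
  · simp [uNeg_mul_apply_succ, companion_apply_castSucc,
      diagonal_apply_ne _ Fin.castSucc_lt_succ.ne']
  · intro i j hij
    have hlt : j.castSucc < i.succ := Fin.castSucc_lt_succ_iff.2 (le_of_lt hij)
    simp [uNeg_mul_apply_succ, companion_apply_castSucc, diagonal_apply_ne _ hlt.ne',
      show i ≠ j from hij.ne']

lemma det_scalar_sub_uNeg_mul_companion_eq_hornerMonic (a : Fin (n + 1) → R) (v : Fin n → R)
    (t : R) :
    (scalar (Fin (n + 1)) t - uNeg (m := n + 1) v * companion a).det =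
      hornerMonic (extendByZero a) t (n + 1) +
        t * hornerSum (fun r => ∑ i ∈ range r, extendByZero a i * extendByZero v (r - 1 - i) +
          extendByZero v r) t n := by
  rw [det_eq_of_mulVec_eq_single _ (by simp) (scalar_sub_uNeg_mul_companion_mulVec a v t),
    det_submatrix_succ_castSucc_scalar_sub_uNeg_mul_companion, ← mul_pow, neg_one_mul, neg_neg,
    one_pow, one_mul, ← sum_mul_hornerMonic, ← Fin.sum_univ_eq_sum_range]
  simp

theorem det_scalar_sub_uNeg_mul_companion {m : ℕ} (a : Fin m → R) (v : Fin (m - 1) → R)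
    (t : R) :
    (scalar (Fin m) t - uNeg v * companion a).det =
      t ^ m + ∑ r : Fin m,
        (if h : (r : ℕ) + 1 = m then a r
         else a r
           + (∑ i : Fin (r : ℕ), a ⟨(i : ℕ), i.isLt.trans r.isLt⟩
               * v ⟨(r : ℕ) - 1 - (i : ℕ), by have := r.isLt; omega⟩)
           + v ⟨(r : ℕ), Nat.lt_sub_of_add_lt (lt_of_le_of_ne r.isLt h)⟩)
        * t ^ (m - 1 - (r : ℕ)) := by
  rcases m with _ | n
  · simp
  have hcoeff : ∀ r : Fin n,
      (if h : (r.castSucc : ℕ) + 1 = n + 1 then a r.castSucc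
       else a r.castSucc
         + (∑ i : Fin (r.castSucc : ℕ), a ⟨(i : ℕ), by omega⟩
             * v ⟨(r.castSucc : ℕ) - 1 - (i : ℕ), by omega⟩)
         + v ⟨(r.castSucc : ℕ), by omega⟩) * t ^ (n + 1 - 1 - r.castSucc) =
      extendByZero a r * t ^ (n - r) + (∑ i ∈ range r,
        extendByZero a i * extendByZero v (r - 1 - i) + extendByZero v r) * t ^ (n - r) := by
    intro r
    have hinner : ∑ i : Fin r, extendByZero a i * extendByZero v (r - 1 - i) =
        ∑ i : Fin r, a ⟨i, by omega⟩ * v ⟨r - 1 - i, by omega⟩ :=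
      sum_congr rfl fun i _ => by
        rw [extendByZero_of_lt a (by omega), extendByZero_of_lt v (by omega)]
    rw [dif_neg (by simp [r.isLt.ne]), show n + 1 - 1 - (r.castSucc : ℕ) = n - r by simp,
      sum_range, hinner, show extendByZero a r = a r.castSucc from extendByZero_val a r.castSucc,
      extendByZero_of_lt v (by omega)]
    simp only [Fin.val_castSucc]
    ring
  rw [det_scalar_sub_uNeg_mul_companion_eq_hornerMonic, Fin.sum_univ_castSucc]
  simp only [hcoeff, sum_add_distrib]
  rw [hornerMonic, hornerSum_succ, mul_hornerSum, mul_hornerSum, sum_range, sum_range,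
    dif_pos (by simp), show n + 1 - 1 - (Fin.last n : ℕ) = 0 by simp, pow_zero, mul_one,
    show extendByZero a n = a (Fin.last n) from extendByZero_val a (Fin.last n)]
  ring

end CompanionMatrix

lemma uNeg_map {R S : Type*} [CommRing R] [CommRing S] {m : ℕ} (v : Fin (m - 1) → R)
    (f : R →+* S) : (uNeg v).map f = uNeg (f ∘ v) := by
  ext i j
  simp only [uNeg, map_apply, of_apply, Function.comp_apply]
  split_ifs <;> simp

lemma companion_map {R S : Type*} [CommRing R] [CommRing S] {m : ℕ} (a : Fin m → R)
    (f : R →+* S) : (companion a).map f = companion (f ∘ a) := by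
  ext i j
  simp only [companion, map_apply, of_apply, Function.comp_apply]
  split_ifs <;> simp

/-- Let `k` be a commutative ring, `m ≥ 1`, `a = (a_1,…,a_m) ∈ k^m` and
`v = (v_1,…,v_{m-1}) ∈ k^{m-1}`.  Then the characteristic polynomial of `u(v)·C(a)` equals
`t^m + b_1 t^{m-1} + ⋯ + b_{m-1} t + b_m`, where `b_m = a_m` and
`b_r = a_r + Σ_{i=1}^{r-1} a_i v_{r-i} + v_r` for `1 ≤ r ≤ m-1`
(below `r : Fin m` encodes the index `r+1`, so `b_{r+1}` multiplies `t^{m-1-r}`). -/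
theorem stmt6 {k : Type*} [CommRing k] {m : ℕ}
    (a : Fin m → k) (v : Fin (m - 1) → k) :
    (uNeg v * companion a).charpoly =
      Polynomial.X ^ m + ∑ r : Fin m, Polynomial.C
        (if h : (r : ℕ) + 1 = m then a r
         else a r
           + (∑ i : Fin (r : ℕ), a ⟨(i : ℕ), by have := i.isLt; have := r.isLt; omega⟩
               * v ⟨(r : ℕ) - 1 - (i : ℕ), by have := i.isLt; have := r.isLt; omega⟩)
           + v ⟨(r : ℕ), by have := r.isLt; omega⟩)
        * Polynomial.X ^ (m - 1 - (r : ℕ)) := by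
  rw [charpoly, charmatrix, RingHom.mapMatrix_apply, Matrix.map_mul, uNeg_map, companion_map,
    det_scalar_sub_uNeg_mul_companion]
  refine congrArg (X ^ m + ·) (sum_congr rfl fun r _ => ?_)
  split_ifs <;> simp
end

section
/- Let k be an algebraically closed field and n ≥ 1. Let Q_1 = {g ∈ GL_n(k) : g e_1 = e_1} (the subgroup fixing the first standard basis vector). Then for every monic polynomial p ∈ k[t] of degree n with nonzero constant term, the action of Q_1 by conjugation on the set {x ∈ GL_n(k) : charpoly(x) = p} has only finitely many orbits; equivalently, there is a finite subset S of GL_n(k) such that every x ∈ GL_n(k) with charpoly(x) = p equals g x_0 g^{−1} for some g ∈ Q_1 and some x_0 ∈ S. -/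
/-!
Conjugating by a `g` with `g e₁ = e₁` amounts to an isomorphism of `k[X]`-modules between the
modules `V_x` (that is, `kⁿ` with `X` acting by `x`) that fixes `e₁`. So the orbits are the
isomorphism classes of the pairs `(V_x, e₁)`. Over an algebraically closed field `V_x` is a sum of
at most `n` blocks `k[X] ⧸ (X - μᵢ)^eᵢ`, with `μᵢ` a root of `p` and `eᵢ ≤ n`. Any vector of a
block is `u (X - μᵢ)^bᵢ` with `u` a unit and `bᵢ ≤ eᵢ`. Multiplying by `u⁻¹` is an automorphism,
so only finitely many isomorphism types remain.
-/

open Polynomial Module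

def LinearEquiv.piSubtypeOfSubsingleton {R ι : Type*} [Semiring R] {M : ι → Type*}
    [∀ i, AddCommMonoid (M i)] [∀ i, Module R (M i)] (P : ι → Prop) [DecidablePred P]
    (h : ∀ i, ¬ P i → Subsingleton (M i)) : (∀ i, M i) ≃ₗ[R] ∀ i : Subtype P, M i where
  toFun f i := f i
  invFun g i := if hi : P i then g ⟨i, hi⟩ else 0
  map_add' _ _ := rfl
  map_smul' _ _ := rfl
  left_inv f := funext fun i => by
    by_cases hi : P i
    · simp [hi]
    · have := h i hi
      exact Subsingleton.elim _ _
  right_inv g := funext fun i => by simp [i.2]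

theorem Ideal.Quotient.exists_eq_unit_mul_mk_pow {R : Type*} [CommRing R] [IsDomain R]
    [IsPrincipalIdealRing R] {π : R} (hπ : Irreducible π) (e : ℕ) (z : R ⧸ Ideal.span {π ^ e}) :
    ∃ b ≤ e, ∃ u : (R ⧸ Ideal.span {π ^ e})ˣ,
      z = u * Ideal.Quotient.mk (Ideal.span {π ^ e}) (π ^ b) := by
  obtain ⟨r, rfl⟩ := Ideal.Quotient.mk_surjective z
  by_cases hr : π ^ e ∣ r
  · refine ⟨e, le_rfl, 1, ?_⟩
    simp only [Units.val_one, one_mul, Ideal.Quotient.eq, Ideal.mem_span_singleton]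
    exact dvd_sub hr dvd_rfl
  obtain ⟨b, c, hπc, rfl⟩ :=
    WfDvdMonoid.max_power_factor (a₀ := r) (by rintro rfl; exact hr (dvd_zero _)) hπ
  have hbe : b < e := lt_of_not_ge fun h => hr ((pow_dvd_pow π h).mul_right c)
  obtain ⟨a, d, had⟩ := hπ.coprime_pow_of_not_dvd e hπc
  set mk := Ideal.Quotient.mk (Ideal.span {π ^ e})
  have hc : IsUnit (mk c) := by
    refine IsUnit.of_mul_eq_one (mk a) ?_
    rw [← map_mul, mul_comm, ← sub_eq_zero, ← map_one mk, ← map_sub,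
      Ideal.Quotient.eq_zero_iff_dvd, ← had]
    exact ⟨-d, by ring⟩
  exact ⟨b, hbe.le, hc.unit, by rw [IsUnit.unit_spec, ← map_mul, mul_comm]⟩

theorem Set.exists_finset_representatives_of_finite {α β : Type*} [Finite β] (s : Set α)
    (P : α → β → Prop) (hP : ∀ a ∈ s, ∃ b, P a b) :
    ∃ S : Finset α, ↑S ⊆ s ∧ ∀ a ∈ s, ∃ a₀ ∈ S, ∃ b, P a b ∧ P a₀ b := by
  rcases s.eq_empty_or_nonempty with rfl | ⟨a, ha⟩
  · exact ⟨∅, by simp, by simp⟩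
  have : Nonempty β := ⟨(hP a ha).choose⟩
  choose! c hc using hP
  obtain ⟨t, hts, hbij⟩ := Set.exists_subset_bijOn s c
  have ht : t.Finite := Set.Finite.of_finite_image (Set.toFinite _) hbij.injOn
  refine ⟨ht.toFinset, by simpa using hts, fun a ha => ?_⟩
  obtain ⟨a₀, ha₀, hca⟩ := hbij.surjOn (Set.mem_image_of_mem c ha)
  exact ⟨a₀, by simpa using ha₀, c a, hc a ha, hca ▸ hc a₀ (hts ha₀)⟩

theorem Matrix.exists_conj_of_aeval_linearEquiv {R n : Type*} [CommRing R] [Fintype n]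
    [DecidableEq n] {x y : Matrix n n R}
    (φ : AEval' (Matrix.toLin' x) ≃ₗ[R[X]] AEval' (Matrix.toLin' y)) {v w : n → R}
    (hφ : φ (AEval'.of _ v) = AEval'.of _ w) :
    ∃ g : Matrix n n R, IsUnit g ∧ g.mulVec v = w ∧ y = g * x * g⁻¹ := by
  let η : (n → R) ≃ₗ[R] (n → R) :=
    AEval'.of (Matrix.toLin' x) ≪≫ₗ φ.restrictScalars R ≪≫ₗ (AEval'.of (Matrix.toLin' y)).symm
  have hη : η.toLinearMap ∘ₗ Matrix.toLin' x = Matrix.toLin' y ∘ₗ η.toLinearMap := by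
    refine LinearMap.ext fun u => ?_
    simp only [η, LinearMap.comp_apply, LinearEquiv.coe_coe, LinearEquiv.trans_apply,
      LinearEquiv.restrictScalars_apply, ← AEval'.X_smul_of, map_smul, AEval'.of_symm_X_smul]
  let g := LinearMap.toMatrix' η.toLinearMap
  have hg : IsUnit g :=
    ((Module.End.isUnit_iff _).2 η.bijective).map LinearMap.toMatrixAlgEquiv'
  have hgxy : g * x = y * g := by
    simpa [g, LinearMap.toMatrix'_comp] using congrArg LinearMap.toMatrix' hη
  refine ⟨g, hg, ?_, ?_⟩
  · rw [LinearMap.toMatrix'_mulVec]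
    simp [η, hφ]
  · rw [hgxy, Matrix.mul_nonsing_inv_cancel_right _ _ ((Matrix.isUnit_iff_isUnit_det g).1 hg)]

abbrev JordanModule {k ι : Type*} [Field k] (μ : ι → k) (e : ι → ℕ) : Type _ :=
  ∀ i, k[X] ⧸ Ideal.span {(X - C (μ i)) ^ e i}

namespace JordanModule

variable {k ι : Type*} [Field k] (μ : ι → k) (e : ι → ℕ)

theorem exists_linearEquiv_apply_eq_pow (w : JordanModule μ e) :
    ∃ b : ι → ℕ, b ≤ e ∧ ∃ ψ : JordanModule μ e ≃ₗ[k[X]] JordanModule μ e,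
      ψ w = fun i => Ideal.Quotient.mk _ ((X - C (μ i)) ^ b i) := by
  choose b hb u hu using fun i =>
    Ideal.Quotient.exists_eq_unit_mul_mk_pow (irreducible_X_sub_C (μ i)) (e i) (w i)
  refine ⟨b, hb, LinearEquiv.piCongrRight fun i => ((u i).mulLeftLinearEquiv k[X] _).symm, ?_⟩
  funext i
  rw [LinearEquiv.piCongrRight_apply, hu i, Units.symm_mulLeftLinearEquiv_apply,
    Units.inv_mul_cancel_left]

theorem finrank_eq [Fintype ι] : finrank k (JordanModule μ e) = ∑ i, e i := by
  have (i : ι) : Module.Finite k (k[X] ⧸ Ideal.span {(X - C (μ i)) ^ e i}) :=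
    (AdjoinRoot.powerBasis (pow_ne_zero _ (X_sub_C_ne_zero (μ i)))).finite
  rw [Module.finrank_pi_fintype]
  simp [finrank_quotient_span_eq_natDegree]

theorem pow_dvd_of_forall_smul_eq_zero {p : k[X]} (hp : ∀ y : JordanModule μ e, p • y = 0)
    [DecidableEq ι] (i : ι) : (X - C (μ i)) ^ e i ∣ p := by
  have := congrFun (hp (Pi.single i 1)) i
  rw [Pi.smul_apply, Pi.single_eq_same, Pi.zero_apply] at this
  refine (Ideal.Quotient.eq_zero_iff_dvd _ _).mp ?_
  rwa [← mul_one p, ← smul_eq_mul, ← Ideal.Quotient.mk_eq_mk, Submodule.Quotient.mk_smul]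

end JordanModule

/-- Block `i` is recorded as `(μᵢ, eᵢ, bᵢ)`: its eigenvalue, its size, and the exponent of the
component `(X - μᵢ)^bᵢ` of the distinguished vector. -/
abbrev JordanData {k : Type*} (s : Finset k) (N : ℕ) : Type _ :=
  Σ m : Fin (N + 1), Fin m → s × Fin (N + 1) × Fin (N + 1)

section Endomorphism

variable {k V : Type*} [Field k] [AddCommGroup V] [Module k V]

theorem Module.AEval'.exists_linearEquiv_jordanModule [IsAlgClosed k] [FiniteDimensional k V]
    (f : Module.End k V) :
    ∃ (m : ℕ) (μ : Fin m → k) (e : Fin m → ℕ),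
      (∀ i, e i ≠ 0) ∧ Nonempty (AEval' f ≃ₗ[k[X]] JordanModule μ e) := by
  obtain ⟨ι, _, q, hq, e, ⟨Φ⟩⟩ :=
    Module.equiv_directSum_of_isTorsion (AEval.isTorsion_of_finiteDimensional k V f)
  have hμ (i : ι) : ∃ μ, Associated (X - C μ) (q i) := by
    obtain ⟨μ, hμ⟩ := IsAlgClosed.exists_root (q i)
      (by rw [IsAlgClosed.degree_eq_one_of_irreducible k (hq i)]; exact one_ne_zero)
    exact ⟨μ, (irreducible_X_sub_C μ).associated_of_dvd (hq i) (dvd_iff_isRoot.2 hμ)⟩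
  choose μ hμ using hμ
  let σ := Fintype.equivFin {i // e i ≠ 0}
  refine ⟨_, fun j => μ (σ.symm j), fun j => e (σ.symm j), fun j => (σ.symm j).2, ⟨?_⟩⟩
  refine Φ ≪≫ₗ DirectSum.linearEquivFunOnFintype _ _ _ ≪≫ₗ
    LinearEquiv.piCongrRight (fun i => Submodule.quotEquivOfEq _ _
      (Ideal.span_singleton_eq_span_singleton.2 ((hμ i).pow_pow).symm)) ≪≫ₗ
    LinearEquiv.piSubtypeOfSubsingleton (fun i => e i ≠ 0) (fun i hi => ?_) ≪≫ₗ
    LinearEquiv.piCongrLeft' k[X] _ σ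
  rw [not_not.1 hi, pow_zero, Ideal.span_singleton_one]
  infer_instance

def HasJordanType (f : Module.End k V) (v : V) {ι : Type*} (μ : ι → k) (e b : ι → ℕ) : Prop :=
  ∃ φ : AEval' f ≃ₗ[k[X]] JordanModule μ e,
    φ (AEval'.of f v) = fun i => Ideal.Quotient.mk _ ((X - C (μ i)) ^ b i)

theorem HasJordanType.exists_linearEquiv {W : Type*} [AddCommGroup W] [Module k W]
    {f : Module.End k V} {g : Module.End k W} {v : V} {w : W} {ι : Type*} {μ : ι → k}
    {e b : ι → ℕ} (hf : HasJordanType f v μ e b) (hg : HasJordanType g w μ e b) :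
    ∃ φ : AEval' f ≃ₗ[k[X]] AEval' g, φ (AEval'.of f v) = AEval'.of g w := by
  obtain ⟨φ, hφ⟩ := hf
  obtain ⟨ψ, hψ⟩ := hg
  exact ⟨φ ≪≫ₗ ψ.symm, by rw [LinearEquiv.trans_apply, hφ, ← hψ, LinearEquiv.symm_apply_apply]⟩

theorem exists_hasJordanType [IsAlgClosed k] [FiniteDimensional k V] (f : Module.End k V)
    (v : V) {p : k[X]} (hp : aeval f p = 0) :
    ∃ m ≤ finrank k V, ∃ (μ : Fin m → k) (e b : Fin m → ℕ),
      (∀ i, p.IsRoot (μ i) ∧ b i ≤ e i ∧ e i ≤ finrank k V) ∧ HasJordanType f v μ e b := by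
  obtain ⟨m, μ, e, he, ⟨Φ⟩⟩ := AEval'.exists_linearEquiv_jordanModule f
  obtain ⟨b, hb, ψ, hψ⟩ := JordanModule.exists_linearEquiv_apply_eq_pow μ e (Φ (AEval'.of f v))
  have hsum : ∑ i, e i = finrank k V := by
    rw [← JordanModule.finrank_eq μ e, ← (Φ.restrictScalars k).finrank_eq,
      (AEval'.of f).finrank_eq]
  have hkill (y : JordanModule μ e) : p • y = 0 := by
    obtain ⟨u, rfl⟩ := (AEval'.of f ≪≫ₗ Φ.restrictScalars k).surjective y
    rw [LinearEquiv.trans_apply, LinearEquiv.restrictScalars_apply, ← map_smul,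
      ← AEval.of_aeval_smul, hp, zero_smul, map_zero, map_zero]
  refine ⟨m, ?_, μ, e, b, fun i => ⟨?_, hb i, ?_⟩, Φ ≪≫ₗ ψ, hψ⟩
  · calc m = ∑ _ : Fin m, 1 := by simp
      _ ≤ finrank k V := hsum ▸ Finset.sum_le_sum fun i _ => Nat.one_le_iff_ne_zero.2 (he i)
  · exact dvd_iff_isRoot.1 ((dvd_pow_self _ (he i)).trans
      (JordanModule.pow_dvd_of_forall_smul_eq_zero μ e hkill i))
  · exact hsum ▸ Finset.single_le_sum (fun _ _ => Nat.zero_le _) (Finset.mem_univ i)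

def JordanData.IsTypeOf {s : Finset k} {N : ℕ} (δ : JordanData s N) (f : Module.End k V)
    (v : V) : Prop :=
  HasJordanType f v (fun i => ((δ.2 i).1 : k)) (fun i => (δ.2 i).2.1) (fun i => (δ.2 i).2.2)

theorem JordanData.exists_isTypeOf [DecidableEq k] [IsAlgClosed k] [FiniteDimensional k V]
    (f : Module.End k V) (v : V) {p : k[X]} (hp0 : p ≠ 0) (hp : aeval f p = 0) :
    ∃ δ : JordanData p.roots.toFinset (finrank k V), δ.IsTypeOf f v := by
  obtain ⟨m, hm, μ, e, b, hbound, h⟩ := exists_hasJordanType f v hp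
  refine ⟨⟨⟨m, Nat.lt_succ_of_le hm⟩, fun i => (⟨μ i, ?_⟩,
    ⟨e i, Nat.lt_succ_of_le (hbound i).2.2⟩,
    ⟨b i, Nat.lt_succ_of_le ((hbound i).2.1.trans (hbound i).2.2)⟩)⟩, h⟩
  rw [Multiset.mem_toFinset, mem_roots hp0]
  exact (hbound i).1

end Endomorphism

theorem stmt12_general {k : Type*} [Field k] [IsAlgClosed k] {n : ℕ} (hn : 1 ≤ n)
    (p : Polynomial k) :
    ∃ S : Finset (Matrix (Fin n) (Fin n) k),
      (∀ x₀ ∈ S, IsUnit x₀) ∧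
      ∀ x : Matrix (Fin n) (Fin n) k, IsUnit x → x.charpoly = p →
        ∃ x₀ ∈ S, ∃ g : Matrix (Fin n) (Fin n) k,
          IsUnit g ∧
          g.mulVec (Pi.single (⟨0, hn⟩ : Fin n) (1 : k)) =
            Pi.single (⟨0, hn⟩ : Fin n) (1 : k) ∧
          x = g * x₀ * g⁻¹ := by
  classical
  set v : Fin n → k := Pi.single ⟨0, hn⟩ 1
  have htype : ∀ x ∈ {x : Matrix (Fin n) (Fin n) k | IsUnit x ∧ x.charpoly = p},
      ∃ δ : JordanData p.roots.toFinset n, δ.IsTypeOf (Matrix.toLin' x) v := by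
    rintro x ⟨-, rfl⟩
    have := JordanData.exists_isTypeOf (Matrix.toLin' x) v x.charpoly_monic.ne_zero
      (by simpa [Matrix.charpoly_toLin'] using (Matrix.toLin' x).aeval_self_charpoly)
    rwa [Module.finrank_fin_fun] at this
  obtain ⟨S, hSs, hS⟩ := Set.exists_finset_representatives_of_finite _ _ htype
  refine ⟨S, fun x₀ hx₀ => (hSs hx₀).1, fun x hx hxp => ?_⟩
  obtain ⟨x₀, hx₀S, δ, hx, hx₀⟩ := hS x ⟨hx, hxp⟩
  obtain ⟨φ, hφ⟩ := HasJordanType.exists_linearEquiv hx₀ hx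
  exact ⟨x₀, hx₀S, Matrix.exists_conj_of_aeval_linearEquiv φ hφ⟩

/-- Let `k` be an algebraically closed field and `n ≥ 1`.  Let
`Q₁ = {g ∈ GL_n(k) : g e₁ = e₁}`.  Then for every monic polynomial `p` of degree `n`
with nonzero constant term, the conjugation action of `Q₁` on
`{x ∈ GL_n(k) : charpoly(x) = p}` has finitely many orbits: there is a finite set `S`
of invertible matrices such that every invertible `x` with `charpoly(x) = p` equals
`g x₀ g⁻¹` for some `g ∈ Q₁` and `x₀ ∈ S`. -/
theorem stmt12 {k : Type*} [Field k] [IsAlgClosed k] {n : ℕ} (hn : 1 ≤ n)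
    (p : Polynomial k) (hmonic : p.Monic) (hdeg : p.natDegree = n) (h0 : p.coeff 0 ≠ 0) :
    ∃ S : Finset (Matrix (Fin n) (Fin n) k),
      (∀ x₀ ∈ S, IsUnit x₀) ∧
      ∀ x : Matrix (Fin n) (Fin n) k, IsUnit x → x.charpoly = p →
        ∃ x₀ ∈ S, ∃ g : Matrix (Fin n) (Fin n) k,
          IsUnit g ∧
          g.mulVec (Pi.single (⟨0, hn⟩ : Fin n) (1 : k)) =
            Pi.single (⟨0, hn⟩ : Fin n) (1 : k) ∧
          x = g * x₀ * g⁻¹ :=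
  stmt12_general hn p
end
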